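/- Let ρ ∈ (0,1), ν ≥ 0, σ > 0, SNR > 0, δ ∈ [0,1], and let N, K, i be positive integers with i ≤ K. Set α = 1/(1+ν), A = (1−ρ)(1+ν)/N, and B′ = 1/SNR + (1−ρ)·(ν/(1+ν))·K σ²/N. Then ∫_ℝ φ(μ; 0, ρ/N) ∫_ℝ ∫_ℝ φ(z₂; (K−i)μ, (K−i)A) · ( ∫_ℝ φ(z₁; iμ, iA) · φ( y − ασ(z₁ + z₂) − (1−α)σKμ; 0, B′ )^{1/(1+δ)} dz₁ )^{1+δ} dz₂ dy dμ = ( 1 + ((1−ρ)/(1+ν))·i σ²·SNR / (N(1+δ)·ξ) )^{−δ/2}, where ξ = SNR·B′ = 1 + ((1−ρ)ν/(1+ν))·K·SNR·σ²/N. (If K = i, the z₂ integral against φ(z₂; 0, 0) is interpreted as evaluation at z₂ = 0.) -/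

import Mathlib

/-!
A power `φ(x; m, v) ^ q` of a Gaussian density is `(2πv)^((1-q)/2) q^(-1/2) φ(x; m, v/q)`, and
completing the square gives `∫ φ(z; a, v₁) φ(y - c z - d; 0, v₂) dz = φ(y; c a + d, c² v₁ + v₂)`.
Together they show that the `z₁`-integral raised to the power `p = 1 + δ` is
`κ · φ(y; ·, ((ασ)² i A + p B') / p)` with `κ = (1 + (ασ)² i A / (p B'))^(-δ/2)`.
What remains are integrals of Gaussian densities against Gaussian densities in `z₂`, then in `y`
and `μ`, each of which contributes a factor `1`; and `α² A / B' = (1 - ρ) SNR / ((1 + ν) N ξ)`.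
-/

open MeasureTheory

noncomputable section

/-- Density of the real Gaussian distribution `N(m, v)` with mean `m` and variance `v`. -/
def gauss (x m v : ℝ) : ℝ := (2 * Real.pi * v) ^ (-(1:ℝ)/2) * Real.exp (-(x - m)^2 / (2*v))

/-- The inner (`z₁`-integral) factor raised to the power `1 + δ`. -/
def inner16 (ρ σ δ α A B' : ℝ) (N K i : ℕ) (μ y z₂ : ℝ) : ℝ :=
  (∫ z₁ : ℝ, gauss z₁ (i*μ) (i*A) *
    gauss (y - α*σ*(z₁+z₂) - (1-α)*σ*K*μ) 0 B' ^ ((1:ℝ)/(1+δ))) ^ (1+δ)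

open Real ProbabilityTheory

lemma gauss_eq_gaussianPDFReal (x m : ℝ) {v : ℝ} (hv : 0 ≤ v) :
    gauss x m v = gaussianPDFReal m v.toNNReal x := by
  rw [gauss, gaussianPDFReal, Real.coe_toNNReal _ hv, sqrt_eq_rpow, ← rpow_neg (by positivity)]
  norm_num

lemma gauss_nonneg (x m : ℝ) {v : ℝ} (hv : 0 ≤ v) : 0 ≤ gauss x m v := by
  rw [gauss_eq_gaussianPDFReal x m hv]
  exact gaussianPDFReal_nonneg _ _ _

lemma integral_gauss (m : ℝ) {v : ℝ} (hv : 0 < v) : ∫ x, gauss x m v = 1 := by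
  simp_rw [gauss_eq_gaussianPDFReal _ m hv.le]
  exact integral_gaussianPDFReal_eq_one m (by simpa using hv)

lemma gauss_sub_mean (x m v : ℝ) : gauss (x - m) 0 v = gauss x m v := by
  simp [gauss]

lemma gauss_mul_gauss_affine (z a c d y : ℝ) {v₁ v₂ : ℝ} (hv₁ : 0 < v₁) (hv₂ : 0 < v₂) :
    gauss z a v₁ * gauss (y - c * z - d) 0 v₂ =
      gauss y (c * a + d) (c ^ 2 * v₁ + v₂) *
        gauss z ((a * v₂ + c * (y - d) * v₁) / (c ^ 2 * v₁ + v₂)) (v₁ * v₂ / (c ^ 2 * v₁ + v₂)) := by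
  have hS : 0 < c ^ 2 * v₁ + v₂ := by positivity
  unfold gauss
  rw [mul_mul_mul_comm, ← exp_add, mul_mul_mul_comm (_ ^ _), ← exp_add,
    ← mul_rpow (by positivity) (by positivity), ← mul_rpow (by positivity) (by positivity)]
  congr 2
  · field_simp
  · field_simp
    ring

lemma integral_gauss_mul_gauss_affine (a c d y : ℝ) {v₁ v₂ : ℝ} (hv₁ : 0 < v₁) (hv₂ : 0 < v₂) :
    ∫ z, gauss z a v₁ * gauss (y - c * z - d) 0 v₂ = gauss y (c * a + d) (c ^ 2 * v₁ + v₂) := by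
  simp_rw [gauss_mul_gauss_affine _ a c d y hv₁ hv₂]
  rw [integral_const_mul, integral_gauss _ (by positivity), mul_one]

lemma gauss_rpow (x m : ℝ) {v q : ℝ} (hv : 0 < v) (hq : 0 < q) :
    gauss x m v ^ q = (2 * π * v) ^ ((1 - q) / 2) * q ^ (-(1:ℝ) / 2) * gauss x m (v / q) := by
  have hX : 0 < 2 * π * v := by positivity
  have hconst : ((2 * π * v) ^ (-(1:ℝ) / 2)) ^ q =
      (2 * π * v) ^ ((1 - q) / 2) * q ^ (-(1:ℝ) / 2) * (2 * π * (v / q)) ^ (-(1:ℝ) / 2) := by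
    rw [show 2 * π * (v / q) = (2 * π * v) / q by ring, div_rpow hX.le hq.le,
      ← rpow_mul hX.le, mul_right_comm _ (q ^ _), mul_assoc ((2 * π * v) ^ _),
      div_mul_cancel₀ _ (rpow_pos_of_pos hq _).ne', ← rpow_add hX]
    ring_nf
  have hexp : rexp (-(x - m) ^ 2 / (2 * v)) ^ q = rexp (-(x - m) ^ 2 / (2 * (v / q))) := by
    rw [← exp_mul]
    field_simp
  rw [gauss, mul_rpow (by positivity) (exp_nonneg _), hconst, hexp, gauss]
  ring

lemma rpow_integral_gauss_mul_gauss_rpow_one_div (a c d y : ℝ) {v₁ v₂ p : ℝ} (hv₁ : 0 < v₁)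
    (hv₂ : 0 < v₂) (hp : 0 < p) :
    (∫ z, gauss z a v₁ * gauss (y - c * z - d) 0 v₂ ^ (1 / p)) ^ p =
      (1 + c ^ 2 * v₁ / (p * v₂)) ^ ((1 - p) / 2) *
        gauss y (c * a + d) ((c ^ 2 * v₁ + p * v₂) / p) := by
  have hV : 0 < c ^ 2 * v₁ + p * v₂ := by positivity
  have hconst : ((2 * π * v₂) ^ ((1 - 1 / p) / 2) * (1 / p) ^ (-(1:ℝ) / 2)) ^ p *
      ((2 * π * (c ^ 2 * v₁ + p * v₂)) ^ ((1 - p) / 2) * p ^ (-(1:ℝ) / 2)) =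
      (1 + c ^ 2 * v₁ / (p * v₂)) ^ ((1 - p) / 2) := by
    rw [show 1 + c ^ 2 * v₁ / (p * v₂) = (c ^ 2 * v₁ + p * v₂) / (p * v₂) by field_simp; ring,
      mul_rpow (by positivity) (by positivity), ← rpow_mul (by positivity),
      ← rpow_mul (by positivity), rpow_def_of_pos (by positivity : 0 < 2 * π * v₂),
      rpow_def_of_pos (by positivity : 0 < 1 / p), rpow_def_of_pos (by positivity : 0 < 2 * π * _),
      rpow_def_of_pos hp, rpow_def_of_pos (by positivity : 0 < (c ^ 2 * v₁ + p * v₂) / (p * v₂)),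
      ← exp_add, ← exp_add, ← exp_add, exp_eq_exp, log_div hV.ne' (by positivity),
      log_mul (by positivity) hV.ne', log_mul (by positivity) hv₂.ne', log_mul hp.ne' hv₂.ne',
      one_div, log_inv]
    field_simp
    ring
  have hinner : ∀ z, gauss z a v₁ * gauss (y - c * z - d) 0 v₂ ^ (1 / p) =
      (2 * π * v₂) ^ ((1 - 1 / p) / 2) * (1 / p) ^ (-(1:ℝ) / 2) *
        (gauss z a v₁ * gauss (y - c * z - d) 0 (p * v₂)) := fun z => by
    rw [gauss_rpow _ _ hv₂ (one_div_pos.mpr hp), div_div_eq_mul_div, div_one, mul_comm v₂ p]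
    ring
  simp_rw [hinner]
  rw [integral_const_mul, integral_gauss_mul_gauss_affine a c d y hv₁ (by positivity),
    mul_rpow (by positivity) (gauss_nonneg _ _ hV.le), gauss_rpow _ _ hV hp, ← hconst]
  ring

lemma inner16_eq {ρ σ δ α A B' : ℝ} {N K i : ℕ} {μ y z₂ : ℝ} (hiA : 0 < i * A) (hB' : 0 < B')
    (hδ : 0 < 1 + δ) :
    inner16 ρ σ δ α A B' N K i μ y z₂ =
      (1 + (α * σ) ^ 2 * (i * A) / ((1 + δ) * B')) ^ (-δ / 2) *
        gauss (y - α * σ * z₂ - (α * σ * (i * μ) + (1 - α) * σ * K * μ)) 0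
          (((α * σ) ^ 2 * (i * A) + (1 + δ) * B') / (1 + δ)) := by
  have hshift : ∀ z₁, y - α * σ * (z₁ + z₂) - (1 - α) * σ * K * μ =
      y - α * σ * z₁ - (α * σ * z₂ + (1 - α) * σ * K * μ) := fun z₁ => by ring
  simp_rw [inner16, hshift]
  rw [rpow_integral_gauss_mul_gauss_rpow_one_div _ _ _ _ hiA hB' hδ, ← gauss_sub_mean y,
    show (1 - (1 + δ)) / 2 = -δ / 2 by ring]
  congr 2
  ring

theorem statement16_general (ρ ν σ SNR δ α A B' ξ : ℝ) (hρ : ρ ∈ Set.Ioo (0:ℝ) 1)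
    (hν : 0 ≤ ν) (hSNR : 0 < SNR) (hδ : δ ∈ Set.Icc (0:ℝ) 1)
    (N K i : ℕ) (hN : 1 ≤ N) (hi1 : 1 ≤ i)
    (hα : α = 1/(1+ν)) (hA : A = (1-ρ)*(1+ν)/N)
    (hB : B' = 1/SNR + (1-ρ)*(ν/(1+ν))*K*σ^2/N) (hξ : ξ = SNR * B') :
    (∫ μ : ℝ, gauss μ 0 (ρ/N) * ∫ y : ℝ,
      (if i < K then
        ∫ z₂ : ℝ, gauss z₂ (((K - i : ℕ)) * μ) (((K - i : ℕ)) * A) *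
          inner16 ρ σ δ α A B' N K i μ y z₂
      else inner16 ρ σ δ α A B' N K i μ y 0)) =
    (1 + ((1-ρ)/(1+ν)) * i * σ^2 * SNR / (N * (1+δ) * ξ)) ^ (-δ/2) := by
  obtain ⟨hρ0, hρ1⟩ := hρ
  have hN0 : (0:ℝ) < N := by exact_mod_cast hN
  have hA0 : 0 < A := by rw [hA]; exact div_pos (mul_pos (by linarith) (by linarith)) hN0
  have hB0 : 0 < B' := by rw [hB]; have := sub_nonneg.2 hρ1.le; positivity
  have hiA : 0 < i * A := mul_pos (by exact_mod_cast hi1) hA0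
  have hp : 0 < 1 + δ := by linarith [hδ.1]
  have hV : 0 < ((α * σ) ^ 2 * (i * A) + (1 + δ) * B') / (1 + δ) := by positivity
  have hκ : (1 + (α * σ) ^ 2 * (i * A) / ((1 + δ) * B')) ^ (-δ / 2) =
      (1 + ((1-ρ)/(1+ν)) * i * σ^2 * SNR / (N * (1+δ) * ξ)) ^ (-δ/2) := by
    rw [hα, hA, hξ]
    congr 2
    field_simp
  simp_rw [← hκ, inner16_eq hiA hB0 hp]
  by_cases hiK : i < K
  · have hKiA : 0 < ((K - i : ℕ) : ℝ) * A := mul_pos (by simpa using hiK) hA0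
    have hW := add_pos_of_nonneg_of_pos (mul_nonneg (sq_nonneg (α * σ)) hKiA.le) hV
    simp_rw [if_pos hiK, mul_left_comm (gauss _ _ (((K - i : ℕ) : ℝ) * A)), integral_const_mul,
      integral_gauss_mul_gauss_affine _ _ _ _ hKiA hV, integral_gauss _ hW, mul_one]
    rw [integral_mul_const, integral_gauss _ (by positivity), one_mul]
  · simp_rw [if_neg hiK, mul_zero, sub_zero, gauss_sub_mean, integral_const_mul,
      integral_gauss _ hV, mul_one]
    rw [integral_mul_const, integral_gauss _ (by positivity), one_mul]

theorem statement16 (ρ ν σ SNR δ α A B' ξ : ℝ) (hρ : ρ ∈ Set.Ioo (0:ℝ) 1)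
    (hν : 0 ≤ ν) (hσ : 0 < σ) (hSNR : 0 < SNR) (hδ : δ ∈ Set.Icc (0:ℝ) 1)
    (N K i : ℕ) (hN : 1 ≤ N) (hK : 1 ≤ K) (hi1 : 1 ≤ i) (hiK : i ≤ K)
    (hα : α = 1/(1+ν)) (hA : A = (1-ρ)*(1+ν)/N)
    (hB : B' = 1/SNR + (1-ρ)*(ν/(1+ν))*K*σ^2/N) (hξ : ξ = SNR * B') :
    (∫ μ : ℝ, gauss μ 0 (ρ/N) * ∫ y : ℝ,
      (if i < K then
        ∫ z₂ : ℝ, gauss z₂ (((K - i : ℕ)) * μ) (((K - i : ℕ)) * A) *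
          inner16 ρ σ δ α A B' N K i μ y z₂
      else inner16 ρ σ δ α A B' N K i μ y 0)) =
    (1 + ((1-ρ)/(1+ν)) * i * σ^2 * SNR / (N * (1+δ) * ξ)) ^ (-δ/2) :=
  statement16_general ρ ν σ SNR δ α A B' ξ hρ hν hSNR hδ N K i hN hi1 hα hA hB hξ
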